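/- arXiv:1612.02651 — 2 statements merged into one kernel-verified Lean document; each statement's English description precedes it below -/
import Mathlib

section
/- Let n ≥ 2, m ≥ 1, let λ = (λ_{t,i,j}) be any family of integers, and let G = G(n,m,λ) be the τ₂-presented group. Then for every g ∈ G there exist unique integers α_1,…,α_n, γ_1,…,γ_m such that g = a_1^{α_1}⋯a_n^{α_n}·c_1^{γ_1}⋯c_m^{γ_m} in G; that is, if g = a_1^{x_1}⋯a_n^{x_n}·c_1^{y_1}⋯c_m^{y_m} for integers x_i, y_t, then necessarily x_i = α_i and y_t = γ_t for all i, t. -/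
open scoped commutatorElement

/-- A monoid is torsion-free if no nontrivial element has finite order
(the definition `Monoid.IsTorsionFree` of the older Mathlib, since removed). -/
def Monoid.IsTorsionFree (G : Type*) [Monoid G] : Prop :=
  ∀ g : G, g ≠ 1 → ¬IsOfFinOrder g

noncomputable def grpRank (G : Type*) [Group G] : ℕ :=
  sInf {k : ℕ | ∃ S : Finset G, S.card = k ∧ Subgroup.closure (S : Set G) = ⊤}

def IsTau2 (G : Type*) [Group G] : Prop :=
  Group.FG G ∧ Monoid.IsTorsionFree G ∧ ∀ g h : G, ⁅g, h⁆ ∈ Subgroup.center G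

def prodPow {G : Type*} [Group G] {k : ℕ} (v : Fin k → G) (e : Fin k → ℤ) : G :=
  (List.ofFn fun i => v i ^ e i).prod

def tau2Rels (n m : ℕ) (lam : Fin m → Fin n → Fin n → ℤ) :
    Set (FreeGroup (Fin n ⊕ Fin m)) :=
  {r | (∃ i j : Fin n, i < j ∧
          r = ⁅(FreeGroup.of (Sum.inl i) : FreeGroup (Fin n ⊕ Fin m)),
              FreeGroup.of (Sum.inl j)⁆ *
              (prodPow (fun t : Fin m => FreeGroup.of (Sum.inr t)) (fun t => lam t i j))⁻¹) ∨
       (∃ (i : Fin n) (t : Fin m), r = ⁅(FreeGroup.of (Sum.inl i) : FreeGroup (Fin n ⊕ Fin m)),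
              FreeGroup.of (Sum.inr t)⁆) ∨
       (∃ t s : Fin m, r = ⁅(FreeGroup.of (Sum.inr t) : FreeGroup (Fin n ⊕ Fin m)),
              FreeGroup.of (Sum.inr s)⁆)}

def Tau2Group (n m : ℕ) (lam : Fin m → Fin n → Fin n → ℤ) : Type :=
  PresentedGroup (tau2Rels n m lam)

instance (n m : ℕ) (lam : Fin m → Fin n → Fin n → ℤ) : Group (Tau2Group n m lam) :=
  inferInstanceAs (Group (PresentedGroup (tau2Rels n m lam)))

def tau2a {n m : ℕ} {lam : Fin m → Fin n → Fin n → ℤ} (i : Fin n) : Tau2Group n m lam :=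
  PresentedGroup.of (Sum.inl i)

def tau2c {n m : ℕ} {lam : Fin m → Fin n → Fin n → ℤ} (t : Fin m) : Tau2Group n m lam :=
  PresentedGroup.of (Sum.inr t)

def IsCSmall {G : Type*} [Group G] (g : G) : Prop :=
  ∀ x : G, x ∈ Subgroup.centralizer {g} ↔
    ∃ (t : ℤ) (z : G), z ∈ Subgroup.center G ∧ x = g ^ t * z

def IsMalcevBasis {G : Type*} [Group G] {n m : ℕ} (a : Fin n → G) (c : Fin m → G) : Prop :=
  (∀ t, c t ∈ Subgroup.center G) ∧
  (commutator G ≤ Subgroup.closure (Set.range c)) ∧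
  (∀ g : G, ∃! p : (Fin n → ℤ) × (Fin m → ℤ), g = prodPow a p.1 * prodPow c p.2)

/-!
The `c`'s are central and the commutators of the `a`'s lie in `Z = ⟨c₁, …, cₘ⟩`, so `G ⧸ Z` is
abelian and generated by the images of the `a`'s. Hence every `g` is `a₁^{x₁}⋯aₙ^{xₙ}` times an
element of the abelian group `Z`, i.e. times some `c₁^{y₁}⋯cₘ^{yₘ}`.

Uniqueness comes from a concrete model: `ℤⁿ × ℤᵐ` with the product
`(x, y) (x', y') = (x + x', y + y' + β x x')`, where `β x x' = (∑_{i<j} λ_{t,i,j} xᵢ x'ⱼ)ₜ`,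
satisfies the defining relations. The image of `a^x c^y` has first coordinate `x`, and the image
of `c^y` is `(0, y)`.
-/

open Subgroup Function

section ProdPow

variable {G H : Type*} [Group G] [Group H] {k : ℕ}

lemma map_prodPow (φ : G →* H) (v : Fin k → G) (e : Fin k → ℤ) :
    φ (prodPow v e) = prodPow (φ ∘ v) e := by
  simp [prodPow, map_list_prod, List.map_ofFn, Function.comp_def]

lemma prodPow_eq_prod {C : Type*} [CommGroup C] (v : Fin k → C) (e : Fin k → ℤ) :
    prodPow v e = ∏ i, v i ^ e i :=
  Fin.prod_ofFn _

lemma prodPow_ofAdd_single (e : Fin k → ℤ) :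
    prodPow (fun i => Multiplicative.ofAdd (Pi.single i 1 : Fin k → ℤ)) e =
      Multiplicative.ofAdd e := by
  simp only [prodPow_eq_prod, ← ofAdd_zsmul, ← ofAdd_sum]
  congr 1
  ext j
  simp [Finset.sum_apply, Pi.single_apply]

lemma prodPow_mem {S : Subgroup G} {v : Fin k → G} (hv : ∀ i, v i ∈ S) (e : Fin k → ℤ) :
    prodPow v e ∈ S :=
  S.list_prod_mem fun _ hx => by
    obtain ⟨i, rfl⟩ := List.mem_ofFn.1 hx
    exact S.zpow_mem (hv i) _

open scoped IsMulCommutative in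
lemma prodPow_eq_coe_prod_of_mem_center {v : Fin k → G} (hv : ∀ i, v i ∈ center G)
    (e : Fin k → ℤ) : prodPow v e = ↑(∏ i, (⟨v i, hv i⟩ : center G) ^ e i) := by
  rw [← prodPow_eq_prod]
  exact (map_prodPow (center G).subtype (fun i => ⟨v i, hv i⟩) e).symm

lemma prodPow_add_of_mem_center {v : Fin k → G} (hv : ∀ i, v i ∈ center G) (e e' : Fin k → ℤ) :
    prodPow v (e + e') = prodPow v e * prodPow v e' := by
  simp only [prodPow_eq_coe_prod_of_mem_center hv, Pi.add_apply, zpow_add,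
    Finset.prod_mul_distrib, Subgroup.coe_mul]

lemma prodPow_single_of_mem_center {v : Fin k → G} (hv : ∀ i, v i ∈ center G) (i : Fin k) :
    prodPow v (Pi.single i 1) = v i := by
  simp [prodPow_eq_coe_prod_of_mem_center hv, Pi.single_apply]

def prodPowHom (v : Fin k → G) (hv : ∀ i, v i ∈ center G) :
    Multiplicative (Fin k → ℤ) →* G where
  toFun e := prodPow v e.toAdd
  map_one' := by simp [prodPow]
  map_mul' e e' := prodPow_add_of_mem_center hv e e'

lemma exists_prodPow_eq_of_mem_closure {v : Fin k → G} (hv : ∀ i, v i ∈ center G) {g : G}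
    (hg : g ∈ closure (Set.range v)) : ∃ e, g = prodPow v e := by
  have : closure (Set.range v) ≤ (prodPowHom v hv).range := by
    rw [closure_le]
    rintro _ ⟨i, rfl⟩
    exact ⟨Multiplicative.ofAdd (Pi.single i 1), prodPow_single_of_mem_center hv i⟩
  obtain ⟨e, rfl⟩ := this hg
  exact ⟨e.toAdd, rfl⟩

end ProdPow

section Existence

variable {G : Type*} [Group G]

lemma mem_center_of_forall_commute {s : Set G} (hs : closure s = ⊤) {x : G}
    (hx : ∀ y ∈ s, Commute y x) : x ∈ center G := by
  rw [← centralizer_univ, ← coe_top, ← hs, centralizer_closure]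
  exact fun y hy => (hx y hy).eq

theorem exists_prodPow_mul_prodPow {n m : ℕ} {a : Fin n → G} {c : Fin m → G}
    (hgen : closure (Set.range a ∪ Set.range c) = ⊤) (hc : ∀ t, c t ∈ center G)
    (ha : ∀ i j, ⁅a i, a j⁆ ∈ closure (Set.range c)) (g : G) :
    ∃ x y, g = prodPow a x * prodPow c y := by
  set Z := closure (Set.range c)
  have hZ : Z ≤ center G := (closure_le _).2 (Set.range_subset_iff.2 hc)
  have : Z.Normal := ⟨fun z hz g => by rwa [mem_center_iff.1 (hZ hz) g, mul_inv_cancel_right]⟩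
  let π := QuotientGroup.mk' Z
  have hπc (t : Fin m) : π (c t) = 1 := (QuotientGroup.eq_one_iff _).2 (subset_closure ⟨t, rfl⟩)
  have hπgen : closure (π '' (Set.range a ∪ Set.range c)) = ⊤ := by
    rw [← MonoidHom.map_closure, hgen, map_top_of_surjective _ (QuotientGroup.mk'_surjective Z)]
  have hπa (i : Fin n) : π (a i) ∈ center (G ⧸ Z) := by
    refine mem_center_of_forall_commute hπgen ?_
    rintro _ ⟨_, ⟨j, rfl⟩ | ⟨t, rfl⟩, rfl⟩
    · rw [← commutatorElement_eq_one_iff_commute, ← map_commutatorElement]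
      exact (QuotientGroup.eq_one_iff _).2 (ha j i)
    · rw [hπc]
      exact Commute.one_left _
  have hrange :
      closure (Set.range a ∪ Set.range c) ≤ (prodPowHom (π ∘ a) hπa).range.comap π := by
    rw [closure_le]
    rintro _ (⟨i, rfl⟩ | ⟨t, rfl⟩)
    · exact ⟨Multiplicative.ofAdd (Pi.single i 1), prodPow_single_of_mem_center hπa i⟩
    · exact ⟨1, (map_one _).trans (hπc t).symm⟩
  obtain ⟨x, hx⟩ := hrange (hgen ▸ mem_top g)
  have hx' : (prodPow a x.toAdd)⁻¹ * g ∈ Z := by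
    rw [← QuotientGroup.eq]
    exact (map_prodPow π a _).trans hx
  obtain ⟨y, hy⟩ := exists_prodPow_eq_of_mem_closure hc hx'
  exact ⟨x.toAdd, y, by rw [← hy, mul_inv_cancel_left]⟩

end Existence

section Uniqueness

variable {G : Type*} [Group G] {n m : ℕ}

theorem injective_prodPow_mul_prodPow {a : Fin n → G} {c : Fin m → G}
    (ψ : G →* Multiplicative (Fin n → ℤ)) (hψa : ∀ i, ψ (a i) = .ofAdd (Pi.single i 1))
    (hψc : ∀ t, ψ (c t) = 1) (hc : Injective (prodPow c)) :
    Injective fun p : (Fin n → ℤ) × (Fin m → ℤ) => prodPow a p.1 * prodPow c p.2 := by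
  have hψ (x : Fin n → ℤ) (y : Fin m → ℤ) : ψ (prodPow a x * prodPow c y) = .ofAdd x := by
    rw [map_mul, map_prodPow, map_prodPow, prodPow_eq_prod (ψ ∘ c)]
    simp [hψc, Function.comp_def, hψa, prodPow_ofAdd_single]
  rintro ⟨x, y⟩ ⟨x', y'⟩ h
  obtain rfl : x = x' := by simpa [hψ] using congrArg ψ h
  exact Prod.ext rfl (hc (mul_left_cancel h))

end Uniqueness

/-- The central extension of `A` by `B` with the bilinear 2-cocycle `β`. -/
@[ext]
structure TwistedProd {A B : Type*} [AddCommGroup A] [AddCommGroup B] (β : A →+ A →+ B) where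
  fst : A
  snd : B

namespace TwistedProd

variable {A B : Type*} [AddCommGroup A] [AddCommGroup B] {β : A →+ A →+ B}

instance : Mul (TwistedProd β) := ⟨fun p q => ⟨p.fst + q.fst, p.snd + q.snd + β p.fst q.fst⟩⟩
instance : One (TwistedProd β) := ⟨⟨0, 0⟩⟩
instance : Inv (TwistedProd β) := ⟨fun p => ⟨-p.fst, -p.snd + β p.fst p.fst⟩⟩

@[simp] lemma fst_mul (p q : TwistedProd β) : (p * q).fst = p.fst + q.fst := rfl
@[simp] lemma snd_mul (p q : TwistedProd β) : (p * q).snd = p.snd + q.snd + β p.fst q.fst := rfl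
@[simp] lemma fst_one : (1 : TwistedProd β).fst = 0 := rfl
@[simp] lemma snd_one : (1 : TwistedProd β).snd = 0 := rfl
@[simp] lemma fst_inv (p : TwistedProd β) : p⁻¹.fst = -p.fst := rfl
@[simp] lemma snd_inv (p : TwistedProd β) : p⁻¹.snd = -p.snd + β p.fst p.fst := rfl

instance : Group (TwistedProd β) where
  mul_assoc p q r := by ext <;> simp <;> abel
  one_mul p := by ext <;> simp
  mul_one p := by ext <;> simp
  inv_mul_cancel p := by ext <;> simp

lemma commutatorElement_eq (p q : TwistedProd β) :
    ⁅p, q⁆ = ⟨0, β p.fst q.fst - β q.fst p.fst⟩ := by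
  ext
  · simp [commutatorElement_def]
  · simp [commutatorElement_def]
    abel

def inr : Multiplicative B →* TwistedProd β where
  toFun b := ⟨0, b.toAdd⟩
  map_one' := rfl
  map_mul' b b' := by ext <;> simp

@[simp] lemma fst_inr (b : Multiplicative B) : (inr b : TwistedProd β).fst = 0 := rfl
@[simp] lemma snd_inr (b : Multiplicative B) : (inr b : TwistedProd β).snd = b.toAdd := rfl

lemma prodPow_inr_single {k : ℕ} {β : A →+ A →+ (Fin k → ℤ)} (y : Fin k → ℤ) :
    prodPow (fun t => inr (.ofAdd (Pi.single t 1)) : Fin k → TwistedProd β) y = inr (.ofAdd y) := by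
  rw [← Function.comp_def, ← map_prodPow, prodPow_ofAdd_single]

def fstHom : TwistedProd β →* Multiplicative A where
  toFun p := .ofAdd p.fst
  map_one' := rfl
  map_mul' _ _ := rfl

end TwistedProd

namespace Tau2Group

variable {n m : ℕ} {lam : Fin m → Fin n → Fin n → ℤ}

lemma commutatorElement_tau2a {i j : Fin n} (hij : i < j) :
    ⁅(tau2a i : Tau2Group n m lam), (tau2a j : Tau2Group n m lam)⁆ =
      prodPow tau2c fun t => lam t i j := by
  have h := PresentedGroup.one_of_mem (rels := tau2Rels n m lam) (Or.inl ⟨i, j, hij, rfl⟩)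
  rwa [map_mul, map_inv, map_commutatorElement, map_prodPow, mul_inv_eq_one] at h

lemma commute_tau2a_tau2c (i : Fin n) (t : Fin m) :
    Commute (tau2a i : Tau2Group n m lam) (tau2c t) := by
  have h := PresentedGroup.one_of_mem (rels := tau2Rels n m lam) (Or.inr (Or.inl ⟨i, t, rfl⟩))
  rwa [map_commutatorElement, commutatorElement_eq_one_iff_commute] at h

lemma commute_tau2c_tau2c (s t : Fin m) : Commute (tau2c s : Tau2Group n m lam) (tau2c t) := by
  have h := PresentedGroup.one_of_mem (rels := tau2Rels n m lam) (Or.inr (Or.inr ⟨s, t, rfl⟩))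
  rwa [map_commutatorElement, commutatorElement_eq_one_iff_commute] at h

lemma closure_range_tau2a_union_range_tau2c :
    closure (Set.range tau2a ∪ Set.range tau2c) = (⊤ : Subgroup (Tau2Group n m lam)) := by
  have h : Sum.elim tau2a tau2c = (PresentedGroup.of : _ → Tau2Group n m lam) := by
    ext (i | t) <;> rfl
  rw [← Set.Sum.elim_range, h]
  exact PresentedGroup.closure_range_of _

lemma tau2c_mem_center (t : Fin m) :
    (tau2c t : Tau2Group n m lam) ∈ center (Tau2Group n m lam) := by
  refine mem_center_of_forall_commute closure_range_tau2a_union_range_tau2c ?_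
  rintro _ (⟨i, rfl⟩ | ⟨s, rfl⟩)
  · exact commute_tau2a_tau2c i t
  · exact commute_tau2c_tau2c s t

lemma commutatorElement_tau2a_mem (i j : Fin n) :
    ⁅(tau2a i : Tau2Group n m lam), (tau2a j : Tau2Group n m lam)⁆ ∈
      closure (Set.range tau2c) := by
  rcases lt_trichotomy i j with hij | rfl | hji
  · rw [commutatorElement_tau2a hij]
    exact prodPow_mem (fun t => Subgroup.subset_closure (Set.mem_range_self t)) _
  · rw [commutatorElement_self]
    exact one_mem _
  · rw [← commutatorElement_inv, commutatorElement_tau2a hji]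
    exact inv_mem (prodPow_mem (fun t => Subgroup.subset_closure (Set.mem_range_self t)) _)

open Matrix in
/-- `(x, x') ↦ (∑_{i<j} λ_{t,i,j} xᵢ x'ⱼ)ₜ`. -/
def upperForm (lam : Fin m → Fin n → Fin n → ℤ) :
    (Fin n → ℤ) →+ (Fin n → ℤ) →+ (Fin m → ℤ) :=
  AddMonoidHom.mk'
    (fun x => AddMonoidHom.mk'
      (fun x' t => x ⬝ᵥ (of (fun i j => if i < j then lam t i j else 0) *ᵥ x'))
      fun _ _ => by ext; simp [mulVec_add, dotProduct_add])
    fun _ _ => by ext; simp [add_dotProduct]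

lemma upperForm_single (i j : Fin n) :
    upperForm lam (Pi.single i 1) (Pi.single j 1) = fun t => if i < j then lam t i j else 0 := by
  ext t
  simp [upperForm]

def modelGen (lam : Fin m → Fin n → Fin n → ℤ) : Fin n ⊕ Fin m → TwistedProd (upperForm lam) :=
  Sum.elim (fun i => ⟨Pi.single i 1, 0⟩) fun t => TwistedProd.inr (.ofAdd (Pi.single t 1))

lemma lift_modelGen_tau2Rels : ∀ r ∈ tau2Rels n m lam, FreeGroup.lift (modelGen lam) r = 1 := by
  rintro r (⟨i, j, hij, rfl⟩ | ⟨i, t, rfl⟩ | ⟨s, t, rfl⟩)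
  · rw [map_mul, map_inv, map_commutatorElement, map_prodPow, mul_inv_eq_one]
    ext <;> simp [modelGen, Function.comp_def, TwistedProd.prodPow_inr_single,
      TwistedProd.commutatorElement_eq, upperForm_single, hij, asymm hij]
  all_goals
    rw [map_commutatorElement, TwistedProd.commutatorElement_eq]
    ext <;> simp [modelGen]

def toTwistedProd : Tau2Group n m lam →* TwistedProd (upperForm lam) :=
  PresentedGroup.toGroup lift_modelGen_tau2Rels

lemma toTwistedProd_tau2a (i : Fin n) :
    toTwistedProd (tau2a i : Tau2Group n m lam) = ⟨Pi.single i 1, 0⟩ :=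
  PresentedGroup.toGroup.of _

lemma toTwistedProd_tau2c (t : Fin m) :
    toTwistedProd (tau2c t : Tau2Group n m lam) = TwistedProd.inr (.ofAdd (Pi.single t 1)) :=
  PresentedGroup.toGroup.of _

lemma toTwistedProd_prodPow_tau2c (y : Fin m → ℤ) :
    toTwistedProd (prodPow (tau2c : Fin m → Tau2Group n m lam) y) =
      TwistedProd.inr (.ofAdd y) := by
  rw [map_prodPow, ← TwistedProd.prodPow_inr_single]
  exact congrArg (prodPow · y) (funext toTwistedProd_tau2c)

theorem injective_prodPow_tau2a_mul_prodPow_tau2c :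
    Injective fun p : (Fin n → ℤ) × (Fin m → ℤ) =>
      prodPow (tau2a : Fin n → Tau2Group n m lam) p.1 * prodPow tau2c p.2 := by
  refine injective_prodPow_mul_prodPow (TwistedProd.fstHom.comp toTwistedProd)
    (fun i => congrArg TwistedProd.fstHom (toTwistedProd_tau2a i)) (fun t => ?_) fun y y' h => ?_
  · exact congrArg TwistedProd.fstHom (toTwistedProd_tau2c t)
  · have h' := congrArg (fun g => (toTwistedProd g).snd) h
    simpa only [toTwistedProd_prodPow_tau2c, TwistedProd.snd_inr, toAdd_ofAdd] using h'

theorem surjective_prodPow_tau2a_mul_prodPow_tau2c :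
    Surjective fun p : (Fin n → ℤ) × (Fin m → ℤ) =>
      prodPow (tau2a : Fin n → Tau2Group n m lam) p.1 * prodPow tau2c p.2 := fun g => by
  obtain ⟨x, y, h⟩ := exists_prodPow_mul_prodPow closure_range_tau2a_union_range_tau2c
    tau2c_mem_center commutatorElement_tau2a_mem g
  exact ⟨(x, y), h.symm⟩

end Tau2Group

theorem stmt1_general (n m : ℕ) (lam : Fin m → Fin n → Fin n → ℤ) :
    ∀ g : Tau2Group n m lam,
      ∃! p : (Fin n → ℤ) × (Fin m → ℤ),
        g = prodPow (@tau2a n m lam) p.1 * prodPow (@tau2c n m lam) p.2 := by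
  intro g
  simpa only [eq_comm] using
    Bijective.existsUnique ⟨Tau2Group.injective_prodPow_tau2a_mul_prodPow_tau2c,
      Tau2Group.surjective_prodPow_tau2a_mul_prodPow_tau2c⟩ g

/-- In the τ₂-presented group `G(n,m,λ)` with n ≥ 2, m ≥ 1, every element
has unique Malcev coordinates: g = a₁^{α₁}⋯aₙ^{αₙ}·c₁^{γ₁}⋯cₘ^{γₘ} for unique integers
α_i, γ_t. -/
theorem stmt1 (n m : ℕ) (hn : 2 ≤ n) (hm : 1 ≤ m) (lam : Fin m → Fin n → Fin n → ℤ) :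
    ∀ g : Tau2Group n m lam,
      ∃! p : (Fin n → ℤ) × (Fin m → ℤ),
        g = prodPow (@tau2a n m lam) p.1 * prodPow (@tau2c n m lam) p.2 :=
  stmt1_general n m lam
end

section
/- Let G be a τ₂-group and let a, b ∈ G be c-small elements with c := [a,b] ≠ 1. Then for all x, y ∈ G with [x,a] = 1 and [y,b] = 1, there exist unique integers s, t such that [x,b] = c^s and [a,y] = c^t, and moreover [x,y] = c^{s·t}. -/
open scoped commutatorElement

/-! c-smallness of `a` and `b` writes `x = a ^ s * z` and `y = b ^ t * w` with `z`, `w` central.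
Central factors do not change commutators, and when `⁅a, b⁆` is central the commutator is
bilinear on powers of `a` and `b`, so `⁅x, b⁆ = ⁅a, b⁆ ^ s`, `⁅a, y⁆ = ⁅a, b⁆ ^ t` and
`⁅x, y⁆ = ⁅a, b⁆ ^ (s * t)`. Torsion-freeness makes `n ↦ ⁅a, b⁆ ^ n` injective, hence the
exponents unique. -/

section CentralCommutator

variable {G : Type*} [Group G] {g h z : G}

theorem commutatorElement_mul_mem_center_left (hz : z ∈ Subgroup.center G) :
    ⁅g * z, h⁆ = ⁅g, h⁆ := by
  have hzh : Commute z h := (Subgroup.mem_center_iff.mp hz h).symm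
  rw [commutatorElement_mul_left_eq_conj_mul, hzh.commutator_eq, mul_one, mul_inv_cancel, one_mul]

theorem commutatorElement_mul_mem_center_right (hz : z ∈ Subgroup.center G) :
    ⁅g, h * z⁆ = ⁅g, h⁆ := by
  have hgz : Commute g z := Subgroup.mem_center_iff.mp hz g
  rw [commutatorElement_mul_right_eq_mul_conj, hgz.commutator_eq, mul_one, mul_inv_cancel_right]

theorem commutatorElement_zpow_left (hc : ⁅g, h⁆ ∈ Subgroup.center G) (n : ℤ) :
    ⁅g ^ n, h⁆ = ⁅g, h⁆ ^ n := by
  have hcomm : Commute ⁅h, g⁆ g := by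
    rw [← commutatorElement_inv]
    exact (Subgroup.mem_center_iff.mp (inv_mem hc) g).symm
  calc ⁅g ^ n, h⁆
      = g ^ n * (h * g ^ n * h⁻¹)⁻¹ := by
        simp only [commutatorElement_def, mul_inv_rev, inv_inv, mul_assoc]
    _ = g ^ n * ((⁅h, g⁆ * g) ^ n)⁻¹ := by
        rw [← conj_zpow, commutatorElement_def, inv_mul_cancel_right]
    _ = ⁅g, h⁆ ^ n := by
        rw [hcomm.mul_zpow, mul_inv_rev, mul_inv_cancel_left, ← inv_zpow, commutatorElement_inv]

theorem commutatorElement_zpow_right (hc : ⁅g, h⁆ ∈ Subgroup.center G) (n : ℤ) :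
    ⁅g, h ^ n⁆ = ⁅g, h⁆ ^ n := by
  have hc' : ⁅h, g⁆ ∈ Subgroup.center G := by
    rw [← commutatorElement_inv]
    exact inv_mem hc
  rw [← commutatorElement_inv, commutatorElement_zpow_left hc', ← inv_zpow, commutatorElement_inv]

theorem commutatorElement_zpow_mul_zpow_mul {w : G} (hc : ⁅g, h⁆ ∈ Subgroup.center G)
    (hz : z ∈ Subgroup.center G) (hw : w ∈ Subgroup.center G) (m n : ℤ) :
    ⁅g ^ m * z, h ^ n * w⁆ = ⁅g, h⁆ ^ (m * n) := by
  have hcn : ⁅g, h ^ n⁆ ∈ Subgroup.center G := by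
    rw [commutatorElement_zpow_right hc]
    exact zpow_mem hc n
  rw [commutatorElement_mul_mem_center_left hz, commutatorElement_mul_mem_center_right hw,
    commutatorElement_zpow_left hcn, commutatorElement_zpow_right hc, ← zpow_mul, mul_comm]

end CentralCommutator

theorem IsCSmall.exists_eq_zpow_mul_of_commute {G : Type*} [Group G] {a x : G} (ha : IsCSmall a)
    (hx : Commute x a) : ∃ t : ℤ, ∃ z ∈ Subgroup.center G, x = a ^ t * z :=
  (ha x).mp (Subgroup.mem_centralizer_singleton_iff.mpr hx)

theorem Monoid.IsTorsionFree.zpow_injective {G : Type*} [Group G] (hG : Monoid.IsTorsionFree G)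
    {c : G} (hc : c ≠ 1) : Function.Injective fun n : ℤ => c ^ n :=
  injective_zpow_iff_not_isOfFinOrder.mpr (hG c hc)

/-- If G is a τ₂-group and a, b are c-small with c := [a,b] ≠ 1, then for all
x, y ∈ G with [x,a] = 1 and [y,b] = 1 there are unique integers s, t with [x,b] = cˢ and
[a,y] = cᵗ, and moreover [x,y] = c^{s·t}. -/
theorem stmt9 (G : Type) [Group G] (hT : IsTau2 G) (a b : G)
    (ha : IsCSmall a) (hb : IsCSmall b) (hc : ⁅a, b⁆ ≠ 1) :
    ∀ x y : G, ⁅x, a⁆ = 1 → ⁅y, b⁆ = 1 →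
      (∃! s : ℤ, ⁅x, b⁆ = ⁅a, b⁆ ^ s) ∧
      (∃! t : ℤ, ⁅a, y⁆ = ⁅a, b⁆ ^ t) ∧
      (∀ s t : ℤ, ⁅x, b⁆ = ⁅a, b⁆ ^ s → ⁅a, y⁆ = ⁅a, b⁆ ^ t →
        ⁅x, y⁆ = ⁅a, b⁆ ^ (s * t)) := by
  obtain ⟨-, htf, hcent⟩ := hT
  have hinj := htf.zpow_injective hc
  intro x y hxa hyb
  obtain ⟨s, z, hz, rfl⟩ :=
    ha.exists_eq_zpow_mul_of_commute (commutatorElement_eq_one_iff_commute.mp hxa)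
  obtain ⟨t, w, hw, rfl⟩ :=
    hb.exists_eq_zpow_mul_of_commute (commutatorElement_eq_one_iff_commute.mp hyb)
  have hxb : ⁅a ^ s * z, b⁆ = ⁅a, b⁆ ^ s := by
    rw [commutatorElement_mul_mem_center_left hz, commutatorElement_zpow_left (hcent a b)]
  have hay : ⁅a, b ^ t * w⁆ = ⁅a, b⁆ ^ t := by
    rw [commutatorElement_mul_mem_center_right hw, commutatorElement_zpow_right (hcent a b)]
  refine ⟨⟨s, hxb, fun s' hs' => hinj (hs'.symm.trans hxb)⟩,
    ⟨t, hay, fun t' ht' => hinj (ht'.symm.trans hay)⟩, fun s' t' hs' ht' => ?_⟩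
  rw [hinj (hs'.symm.trans hxb), hinj (ht'.symm.trans hay)]
  exact commutatorElement_zpow_mul_zpow_mul (hcent a b) hz hw s t
end
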